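/- arXiv:2106.08678 — 2 statements merged into one kernel-verified Lean document; each statement's English description precedes it below -/
import Mathlib

section
/- Let p = (x, u) and q = (y, v) in ℝⁿ × ℝ, D = ‖x - y‖ the Euclidean distance, T = v - u. With TFD parameters α = 0, r = 0, k = 1, τ₁, τ₂ > 0, the Triple Fermi-Dirac value 𝓕(p,q) = ((1/(e^{(D²-T²)/τ₁}+1))·(1/(e^{-T/τ₂}+1))·(1/2))^{1/3} satisfies 𝓕(p,q) ≥ 1/2 if and only if e^{-T/τ₂} < 3 and D² ≤ τ₁·log((3 - e^{-T/τ₂})/(1 + e^{-T/τ₂})) + T². -/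
/-! Taking cubes, `𝓕 ≥ 1/2` says `(a + 1)(b + 1) ≤ 4` for the Boltzmann factors
`a = exp ((D² - T²) / τ₁)` and `b = exp (-T / τ₂)`. Since `a > 0` this forces `b < 3`, and then
it is the bound `a ≤ (3 - b) / (1 + b)`, which becomes the stated inequality on taking logarithms. -/

open Real

lemma half_le_rpow_one_third_iff {s : ℝ} (hs : 0 ≤ s) :
    1 / 2 ≤ s ^ ((1 : ℝ) / 3) ↔ 1 / 8 ≤ s := by
  rw [show (1 : ℝ) / 3 = (3 : ℝ)⁻¹ by norm_num,
    le_rpow_inv_iff_of_pos (by norm_num) hs (by norm_num)]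
  norm_num

lemma eighth_le_fermiDirac_product_iff {a b : ℝ} (ha : 0 < a + 1) (hb : 0 < b + 1) :
    1 / 8 ≤ 1 / (a + 1) * (1 / (b + 1)) * (1 / 2) ↔ (a + 1) * (b + 1) ≤ 4 := by
  rw [div_mul_div_comm, div_mul_div_comm, one_mul, one_mul,
    div_le_div_iff₀ (by norm_num) (by positivity)]
  constructor <;> intro h <;> linarith

lemma add_one_mul_add_one_le_four_iff {a b : ℝ} (ha : 0 < a) (hb : -1 < b) :
    (a + 1) * (b + 1) ≤ 4 ↔ b < 3 ∧ a ≤ (3 - b) / (1 + b) := by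
  rw [le_div_iff₀ (by linarith)]
  constructor
  · intro h
    exact ⟨by nlinarith, by linarith⟩
  · rintro ⟨-, h⟩
    linarith

lemma exp_div_le_iff_le_mul_log {s τ c : ℝ} (hτ : 0 < τ) (hc : 0 < c) :
    exp (s / τ) ≤ c ↔ s ≤ τ * log c := by
  rw [← le_log_iff_exp_le hc, div_le_iff₀ hτ, mul_comm]

theorem tfd_ge_half_iff_general (τ₁ τ₂ : ℝ) (hτ₁ : 0 < τ₁)
    (D T : ℝ) :
    ((1 / (Real.exp ((D ^ 2 - T ^ 2) / τ₁) + 1)) *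
     (1 / (Real.exp (-T / τ₂) + 1)) * (1 / 2)) ^ ((1 : ℝ) / 3) ≥ 1 / 2 ↔
    Real.exp (-T / τ₂) < 3 ∧
      D ^ 2 ≤ τ₁ * Real.log ((3 - Real.exp (-T / τ₂)) / (1 + Real.exp (-T / τ₂))) + T ^ 2 := by
  have ha := exp_pos ((D ^ 2 - T ^ 2) / τ₁)
  have hb := exp_pos (-T / τ₂)
  rw [ge_iff_le, half_le_rpow_one_third_iff (by positivity),
    eighth_le_fermiDirac_product_iff (by linarith) (by linarith),
    add_one_mul_add_one_le_four_iff ha (by linarith)]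
  refine and_congr_right fun hb3 => ?_
  rw [exp_div_le_iff_le_mul_log hτ₁ (div_pos (by linarith) (by linarith)), sub_le_iff_le_add]

theorem tfd_ge_half_iff (n : ℕ) (τ₁ τ₂ : ℝ) (hτ₁ : 0 < τ₁) (hτ₂ : 0 < τ₂)
    (x y : EuclideanSpace ℝ (Fin n)) (u v : ℝ)
    (D T : ℝ) (hD : D = ‖x - y‖) (hT : T = v - u) :
    ((1 / (Real.exp ((D ^ 2 - T ^ 2) / τ₁) + 1)) *
     (1 / (Real.exp (-T / τ₂) + 1)) * (1 / 2)) ^ ((1 : ℝ) / 3) ≥ 1 / 2 ↔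
    Real.exp (-T / τ₂) < 3 ∧
      D ^ 2 ≤ τ₁ * Real.log ((3 - Real.exp (-T / τ₂)) / (1 + Real.exp (-T / τ₂))) + T ^ 2 :=
  tfd_ge_half_iff_general τ₁ τ₂ hτ₁ D T
end

section
/- With α = 0, r = 0, k = 1 and τ₁, τ₂ > 0, if p = (x,u), q = (y,v) ∈ ℝⁿ × ℝ satisfy the Euclidean disk inclusion condition ‖x - y‖ ≤ v - u and v - u ≥ 0, then the Triple Fermi-Dirac value 𝓕(p,q) ≥ 1/2. That is, the region of disk-inclusion is contained in the region where the TFD probability exceeds 1/2. -/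
/-! Since `0 ≤ D ≤ T`, both exponents `(D² - T²)/τ₁` and `-T/τ₂` are nonpositive, so
each Fermi–Dirac factor `1/(eᵗ + 1)` is at least `1/2`; the geometric mean of three factors
that are all at least `1/2` is at least `1/2`. -/

open Real

lemma half_le_one_div_exp_add_one {t : ℝ} (ht : t ≤ 0) : 1 / 2 ≤ 1 / (exp t + 1) :=
  one_div_le_one_div_of_le (by positivity) (by linarith [exp_le_one_iff.2 ht])

lemma le_rpow_one_div_three_of_le {s a b c : ℝ} (hs : 0 ≤ s) (ha : s ≤ a) (hb : s ≤ b)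
    (hc : s ≤ c) : s ≤ (a * b * c) ^ ((1 : ℝ) / 3) := by
  have hcube : s ^ 3 ≤ a * b * c := by
    calc s ^ 3 = s * s * s := by ring
      _ ≤ a * b * c := by
        have ha₀ : 0 ≤ a := hs.trans ha
        gcongr
        exact mul_nonneg ha₀ (hs.trans hb)
  calc s = (s ^ 3) ^ ((1 : ℝ) / 3) := by
        rw [← rpow_natCast, ← rpow_mul hs]; norm_num
    _ ≤ (a * b * c) ^ ((1 : ℝ) / 3) := by gcongr

theorem disk_inclusion_subset_tfd_half_general (n : ℕ) (τ₁ τ₂ : ℝ) (hτ₁ : 0 < τ₁) (hτ₂ : 0 < τ₂)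
    (x y : EuclideanSpace ℝ (Fin n))
    (D T : ℝ) (hD : D = ‖x - y‖)
    (hdisk : D ≤ T) (hTnn : 0 ≤ T) :
    ((1 / (Real.exp ((D ^ 2 - T ^ 2) / τ₁) + 1)) *
     (1 / (Real.exp (-T / τ₂) + 1)) * (1 / 2)) ^ ((1 : ℝ) / 3) ≥ 1 / 2 := by
  have hD₀ : 0 ≤ D := hD ▸ norm_nonneg _
  have hsq : D ^ 2 - T ^ 2 ≤ 0 := sub_nonpos.2 (pow_le_pow_left₀ hD₀ hdisk 2)
  exact le_rpow_one_div_three_of_le (by norm_num)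
    (half_le_one_div_exp_add_one (div_nonpos_of_nonpos_of_nonneg hsq hτ₁.le))
    (half_le_one_div_exp_add_one (div_nonpos_of_nonpos_of_nonneg (neg_nonpos.2 hTnn) hτ₂.le))
    le_rfl

theorem disk_inclusion_subset_tfd_half (n : ℕ) (τ₁ τ₂ : ℝ) (hτ₁ : 0 < τ₁) (hτ₂ : 0 < τ₂)
    (x y : EuclideanSpace ℝ (Fin n)) (u v : ℝ)
    (D T : ℝ) (hD : D = ‖x - y‖) (hT : T = v - u)
    (hdisk : D ≤ T) (hTnn : 0 ≤ T) :
    ((1 / (Real.exp ((D ^ 2 - T ^ 2) / τ₁) + 1)) *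
     (1 / (Real.exp (-T / τ₂) + 1)) * (1 / 2)) ^ ((1 : ℝ) / 3) ≥ 1 / 2 :=
  disk_inclusion_subset_tfd_half_general n τ₁ τ₂ hτ₁ hτ₂ x y D T hD hdisk hTnn
end
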